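/- arXiv:1805.05900 — 2 statements merged into one kernel-verified Lean document; each statement's English description precedes it below -/
import Mathlib

section
/- Let G be a stitched 2-ichromatic ordered graph with parts v_1, ..., v_m and v_{m+1}, ..., v_{m+n}, and suppose that v_1 v_{m+n} and v_m v_{m+1} are edges of G. Then R(G) ≥ 5r + 1, where r = min(m,n) - 1. -/
/-- A `t`-edge-coloring `c` of the complete graph on the ordered vertex set `Fin N`
contains a monochromatic ordered copy of the ordered graph `G` on `Fin M`. -/
def HasMonoCopy {M N t : ℕ} (G : SimpleGraph (Fin M)) (c : Fin N → Fin N → Fin t) : Prop :=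
  ∃ k : Fin t, ∃ f : Fin M → Fin N, StrictMono f ∧
    ∀ u v : Fin M, u < v → G.Adj u v → c (f u) (f v) = k

/-- The `t`-color ordered Ramsey number of the ordered graph `G`: the least `N` such that
every `t`-coloring of the edges of the complete graph on `Fin N` contains a monochromatic
ordered copy of `G`. -/
noncomputable def orderedRamsey {M : ℕ} (t : ℕ) (G : SimpleGraph (Fin M)) : ℕ :=
  sInf {N : ℕ | ∀ c : Fin N → Fin N → Fin t, HasMonoCopy G c}

/-- An interval coloring of an ordered graph with `k` parts, encoded as a monotone
surjection onto `Fin k` whose fibers (the parts, which are intervals of consecutive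
vertices) are independent sets. -/
def IsIntervalColoring {N k : ℕ} (G : SimpleGraph (Fin N)) (p : Fin N → Fin k) : Prop :=
  Monotone p ∧ Function.Surjective p ∧ ∀ u v : Fin N, G.Adj u v → p u ≠ p v

/-- The interval chromatic number of an ordered graph. -/
noncomputable def intervalChromatic {N : ℕ} (G : SimpleGraph (Fin N)) : ℕ :=
  sInf {k : ℕ | ∃ p : Fin N → Fin k, IsIntervalColoring G p}

/-!
Split `5r` vertices into five consecutive blocks of `r` vertices and colour an edge by the pair
of blocks of its ends. In a monochromatic copy of `G`, each part spans more than `r` vertices, so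
`v_1, v_m` lie in blocks `a₁ < a₂` and `v_{m+1}, v_{m+n}` in blocks `b₁ < b₂` with `a₂ ≤ b₁`,
and the edges `v_1 v_{m+n}`, `v_m v_{m+1}` give a crossing pair `a₁b₂`, `a₂b₁` of their colour.
Following a path from `v_1` to `v_m` in the copy, the block of each vertex stays in one component
of the bipartite graph of left and right blocks joined in that colour; the pattern is chosen so
that `a₁` and `a₂` never share a component when such a crossing pair exists. Since `sInf ∅ = 0`,
the bound also needs `R(G)` to be finite: Ramsey's theorem, by the Erdős–Szekeres recursion.
-/

open Finset

section Ramsey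

variable {α : Type*} [LinearOrder α]

def IsMonoSet (c : α → α → Fin 2) (k : Fin 2) (s : Finset α) : Prop :=
  ∀ u ∈ s, ∀ v ∈ s, u < v → c u v = k

lemma IsMonoSet.insert {c : α → α → Fin 2} {k : Fin 2} {s : Finset α} {z : α}
    (hs : IsMonoSet c k s) (hz : ∀ v ∈ s, z < v ∧ c z v = k) : IsMonoSet c k (insert z s) := by
  intro u hu v hv huv
  rcases mem_insert.mp hu with rfl | hu' <;> rcases mem_insert.mp hv with rfl | hv'
  · exact absurd huv (lt_irrefl _)
  · exact (hz v hv').2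
  · exact absurd huv (hz u hu').1.asymm
  · exact hs u hu' v hv' huv

theorem exists_isMonoSet (c : α → α → Fin 2) : ∀ (p q : ℕ) (s : Finset α),
    (p + q).choose p ≤ #s → ∃ t ⊆ s, (#t = p ∧ IsMonoSet c 0 t) ∨ (#t = q ∧ IsMonoSet c 1 t)
  | 0, _, _, _ => ⟨∅, empty_subset _, .inl ⟨rfl, by simp [IsMonoSet]⟩⟩
  | _ + 1, 0, _, _ => ⟨∅, empty_subset _, .inr ⟨rfl, by simp [IsMonoSet]⟩⟩
  | p + 1, q + 1, s, hs => by
    have hne : s.Nonempty := card_pos.mp (lt_of_lt_of_le (Nat.choose_pos (by omega)) hs)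
    set z := s.min' hne
    set S : Fin 2 → Finset α := fun k => (s.erase z).filter (c z · = k)
    have hS : ∀ k, S k ⊆ s := fun k => (filter_subset _ _).trans (erase_subset _ _)
    have extend : ∀ k t, t ⊆ S k → IsMonoSet c k t →
        insert z t ⊆ s ∧ #(insert z t) = #t + 1 ∧ IsMonoSet c k (insert z t) := by
      intro k t hts hmono
      have hz : ∀ v ∈ t, z < v ∧ c z v = k := fun v hv => by
        obtain ⟨hv, hzv⟩ := mem_filter.mp (hts hv)
        exact ⟨lt_of_le_of_ne (s.min'_le v (mem_of_mem_erase hv)) (ne_of_mem_erase hv).symm, hzv⟩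
      exact ⟨insert_subset (s.min'_mem hne) (hts.trans (hS k)),
        card_insert_of_notMem fun h => lt_irrefl z (hz z h).1, hmono.insert hz⟩
    have hsplit : #(S 0) + #(S 1) + 1 = #s := by
      have hS₁ : S 1 = (s.erase z).filter (¬ c z · = 0) := filter_congr fun v _ => by omega
      rw [hS₁, card_filter_add_card_filter_not, card_erase_add_one (s.min'_mem hne)]
    have hpascal := Nat.choose_succ_succ' (p + q + 1) p
    rw [show p + q + 1 + 1 = p + 1 + (q + 1) by omega] at hpascal
    by_cases h₀ : (p + q + 1).choose p ≤ #(S 0)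
    · obtain ⟨t, hts, ⟨hcard, hmono⟩ | hbig⟩ :=
        exists_isMonoSet c p (q + 1) (S 0) (by rwa [← add_assoc])
      · obtain ⟨hsub, hcard', hmono'⟩ := extend 0 t hts hmono
        exact ⟨insert z t, hsub, .inl ⟨by omega, hmono'⟩⟩
      · exact ⟨t, hts.trans (hS 0), .inr hbig⟩
    · obtain ⟨t, hts, hbig | ⟨hcard, hmono⟩⟩ :=
        exists_isMonoSet c (p + 1) q (S 1) (by rw [add_right_comm]; omega)
      · exact ⟨t, hts.trans (hS 1), .inl hbig⟩
      · obtain ⟨hsub, hcard', hmono'⟩ := extend 1 t hts hmono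
        exact ⟨insert z t, hsub, .inr ⟨by omega, hmono'⟩⟩

end Ramsey

theorem exists_forall_hasMonoCopy {M : ℕ} (G : SimpleGraph (Fin M)) :
    ∃ N, ∀ c : Fin N → Fin N → Fin 2, HasMonoCopy G c := by
  refine ⟨(M + M).choose M, fun c => ?_⟩
  obtain ⟨s, -, hs⟩ := exists_isMonoSet c M M univ (by simp)
  obtain ⟨k, hcard, hmono⟩ : ∃ k, #s = M ∧ IsMonoSet c k s := hs.elim (⟨0, ·⟩) (⟨1, ·⟩)
  set e := s.orderEmbOfFin hcard
  exact ⟨k, e, e.strictMono, fun u v huv _ =>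
    hmono _ (s.orderEmbOfFin_mem hcard u) _ (s.orderEmbOfFin_mem hcard v) (e.strictMono huv)⟩

theorem lt_orderedRamsey_of_not_hasMonoCopy {M N : ℕ} {G : SimpleGraph (Fin M)}
    (c : Fin N → Fin N → Fin 2) (hc : ¬ HasMonoCopy G c) : N < orderedRamsey 2 G := by
  obtain ⟨N₀, hN₀⟩ := exists_forall_hasMonoCopy G
  refine Nat.lt_of_succ_le (le_csInf ⟨N₀, hN₀⟩ fun b hb => ?_)
  by_contra! hbN
  have hbN : b ≤ N := by omega
  obtain ⟨k, f, hf, hfc⟩ := hb fun x y => c (Fin.castLE hbN x) (Fin.castLE hbN y)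
  exact hc ⟨k, Fin.castLE hbN ∘ f, (Fin.strictMono_castLE hbN).comp hf, hfc⟩

theorem StrictMono.val_sub_val_le {M N : ℕ} {f : Fin M → Fin N} (hf : StrictMono f)
    (u v : Fin M) : (v : ℕ) - u ≤ (f v : ℕ) - f u := by
  have h := card_le_card_of_injOn f (s := Icc u v) (t := Icc (f u) (f v))
    (fun x hx => by
      obtain ⟨hux, hxv⟩ := mem_Icc.mp hx
      exact mem_Icc.mpr ⟨hf.monotone hux, hf.monotone hxv⟩)
    hf.injective.injOn
  simp only [Fin.card_Icc] at h
  omega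

theorem SimpleGraph.Reachable.apply_eq_of_forall_adj {V β : Type*} {G : SimpleGraph V}
    {φ : V → β} (hφ : ∀ u v, G.Adj u v → φ u = φ v) {u v : V} (h : G.Reachable u v) :
    φ u = φ v := by
  obtain ⟨p⟩ := h
  induction p with
  | nil => rfl
  | cons hadj _ ih => exact (hφ _ _ hadj).trans ih

theorem apply_eq_of_reachable_of_monoCopy {m n N t : ℕ} {γ : Type*} {G : SimpleGraph (Fin (m + n))}
    (hpart1 : ∀ u v : Fin (m + n), (u : ℕ) < m → (v : ℕ) < m → ¬ G.Adj u v)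
    (hpart2 : ∀ u v : Fin (m + n), m ≤ (u : ℕ) → m ≤ (v : ℕ) → ¬ G.Adj u v)
    {c : Fin N → Fin N → Fin t} {k : Fin t} {f : Fin (m + n) → Fin N} (hf : StrictMono f)
    (hfc : ∀ u v, u < v → G.Adj u v → c (f u) (f v) = k)
    {gL gR : Fin N → γ} (hg : ∀ x y, x < y → c x y = k → gL x = gR y)
    {u v : Fin (m + n)} (hu : (u : ℕ) < m) (hv : (v : ℕ) < m) (huv : G.Reachable u v) :
    gL (f u) = gL (f v) := by
  let label (w : Fin (m + n)) : γ := if (w : ℕ) < m then gL (f w) else gR (f w)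
  have hlabel : ∀ w w', w < w' → G.Adj w w' → label w = label w' := by
    intro w w' hlt hadj
    have hw : (w : ℕ) < m := by
      by_contra hw
      exact hpart2 w w' (by omega) (by rw [Fin.lt_def] at hlt; omega) hadj
    have hw' : ¬ (w' : ℕ) < m := fun hw' => hpart1 w w' hw hw' hadj
    simp only [label, if_pos hw, if_neg hw']
    exact hg _ _ (hf hlt) (hfc w w' hlt hadj)
  have := huv.apply_eq_of_forall_adj (φ := label) fun w w' hadj =>
    (lt_or_gt_of_ne (G.ne_of_adj hadj)).elim (hlabel w w' · hadj)
      fun hlt => (hlabel w' w hlt hadj.symm).symm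
  simpa only [label, if_pos hu, if_pos hv] using this

/-- In colour `k`, join left copy `i` and right copy `j` of the blocks when `i ≤ j` and
`blockPattern i j = k`: `leftLabel k` and `rightLabel k` label the components of this bipartite
graph, and no two left copies `a₁ < a₂` in one component admit a crossing pair of edges `a₁b₂`,
`a₂b₁` with `a₂ ≤ b₁ < b₂`. -/
def blockPattern : Fin 5 → Fin 5 → Fin 2 :=
  ![![0, 0, 0, 0, 1], ![0, 1, 1, 0, 0], ![0, 0, 1, 1, 0], ![0, 0, 0, 1, 0], ![0, 0, 0, 0, 0]]

def leftLabel : Fin 2 → Fin 5 → Fin 4 := ![![0, 0, 0, 0, 0], ![0, 1, 1, 1, 2]]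

def rightLabel : Fin 2 → Fin 5 → Fin 4 := ![![0, 0, 0, 0, 0], ![3, 1, 1, 1, 0]]

theorem leftLabel_eq_rightLabel : ∀ (k : Fin 2) (i j : Fin 5), i ≤ j → blockPattern i j = k →
    leftLabel k i = rightLabel k j := by
  decide

theorem leftLabel_ne_of_crossing : ∀ (k : Fin 2) (a₁ a₂ b₁ b₂ : Fin 5), a₁ < a₂ → a₂ ≤ b₁ →
    b₁ < b₂ → blockPattern a₁ b₂ = k → blockPattern a₂ b₁ = k → leftLabel k a₁ ≠ leftLabel k a₂ := by
  decide

theorem Fin.divNat_monotone {K r : ℕ} : Monotone (Fin.divNat : Fin (K * r) → Fin K) :=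
  fun _ _ hxy => Fin.le_def.mpr (Nat.div_le_div_right hxy)

theorem Fin.divNat_lt_divNat {K r : ℕ} {x y : Fin (K * r)} (hr : 0 < r) (h : (x : ℕ) + r ≤ y) :
    x.divNat < y.divNat := by
  have := Nat.div_le_div_right (c := r) h
  rw [Nat.add_div_right _ hr] at this
  exact Fin.lt_def.mpr (by simp only [Fin.coe_divNat]; omega)

def blockColoring (r : ℕ) (x y : Fin (5 * r)) : Fin 2 := blockPattern x.divNat y.divNat

/-- If `G` is a stitched 2-ichromatic ordered graph with parts `v_1,…,v_m` and
`v_{m+1},…,v_{m+n}` having edges `v_1 v_{m+n}` and `v_m v_{m+1}`, then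
`R(G) ≥ 5r + 1` where `r = min(m,n) - 1`. -/
theorem stmt1 {m n : ℕ} (hn : 1 ≤ n)
    (G : SimpleGraph (Fin (m + n)))
    (hpart1 : ∀ u v : Fin (m + n), (u : ℕ) < m → (v : ℕ) < m → ¬ G.Adj u v)
    (hpart2 : ∀ u v : Fin (m + n), m ≤ (u : ℕ) → m ≤ (v : ℕ) → ¬ G.Adj u v)
    (hstitched : G.Reachable ⟨0, by omega⟩ ⟨m - 1, by omega⟩ ∧
      G.Reachable ⟨0, by omega⟩ ⟨m, by omega⟩ ∧
      G.Reachable ⟨0, by omega⟩ ⟨m + n - 1, by omega⟩)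
    (hedge1 : G.Adj ⟨0, by omega⟩ ⟨m + n - 1, by omega⟩)
    (hedge2 : G.Adj ⟨m - 1, by omega⟩ ⟨m, by omega⟩) :
    5 * (min m n - 1) + 1 ≤ orderedRamsey 2 G := by
  set r := min m n - 1
  refine lt_orderedRamsey_of_not_hasMonoCopy (blockColoring r) fun ⟨k, f, hf, hfc⟩ => ?_
  have hr : 0 < r := by have := (f ⟨0, by omega⟩).isLt; omega
  have ha : (f ⟨0, by omega⟩).divNat < (f ⟨m - 1, by omega⟩).divNat :=
    Fin.divNat_lt_divNat hr (by
      have := hf.val_sub_val_le ⟨0, by omega⟩ ⟨m - 1, by omega⟩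
      simp only at this; omega)
  have hab : (f ⟨m - 1, by omega⟩).divNat ≤ (f ⟨m, by omega⟩).divNat :=
    Fin.divNat_monotone (hf.monotone (Fin.mk_le_mk.mpr (by omega)))
  have hb : (f ⟨m, by omega⟩).divNat < (f ⟨m + n - 1, by omega⟩).divNat :=
    Fin.divNat_lt_divNat hr (by
      have := hf.val_sub_val_le ⟨m, by omega⟩ ⟨m + n - 1, by omega⟩
      simp only at this; omega)
  refine leftLabel_ne_of_crossing k _ _ _ _ ha hab hb (hfc _ _ (Fin.mk_lt_mk.mpr (by omega)) hedge1)
    (hfc _ _ (Fin.mk_lt_mk.mpr (by omega)) hedge2) ?_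
  exact apply_eq_of_reachable_of_monoCopy (gL := fun x => leftLabel k x.divNat)
    (gR := fun y => rightLabel k y.divNat) hpart1 hpart2 hf hfc
    (fun x y hxy hxyk => leftLabel_eq_rightLabel k _ _ (Fin.divNat_monotone hxy.le) hxyk)
    (show 0 < m by omega) (show m - 1 < m by omega) hstitched.1
end

section
/- Let t ≥ 2 and let G be a 2-ichromatic ordered graph with parts v_1, ..., v_m and v_{m+1}, ..., v_{m+n} such that v_1 v_{m+1}, v_m v_{m+n}, and v_m v_{m+1} are edges of G. Then R_t(G) ≥ (2t+1)r + 1, where r = min(m,n) - 1. -/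
/-!
Split `Fin N`, `N ≤ (2t+1)r`, into `2t+1` consecutive blocks of length `r` and colour the edge
`x < y` by `χ (x / r) (y / r)`, where `χ` is a `t`-colouring of the triangle `0 ≤ i ≤ j ≤ 2t`
without monochromatic corners `(i, j), (i', j), (i', j')`, `i < i' ≤ j < j'`. In an ordered copy
of `G` the vertices `v_1, v_m` are `m - 1 ≥ r` apart, hence in different blocks, and so are
`v_{m+1}, v_{m+n}`; so the edges `v_1 v_{m+1}`, `v_m v_{m+1}`, `v_m v_{m+n}` span a corner and
cannot all have the same colour. Such a `χ` exists: two colours handle the triangle of side 5,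
and each further colour handles one more outer layer.

Since `orderedRamsey` is an infimum and `sInf ∅ = 0`, the bound also needs the finite ordered
Ramsey theorem, which follows from the greedy chain argument.
-/

open Finset

theorem exists_minHomogeneous_of_pow_le {α κ : Type*} [LinearOrder α] [Fintype κ] [Nonempty κ]
    (c : α → α → κ) (L : ℕ) (s : Finset α) (hs : (Fintype.card κ + 1) ^ L ≤ #s) :
    ∃ (x : Fin L → α) (k : Fin L → κ), StrictMono x ∧ (∀ i, x i ∈ s) ∧
      ∀ i j, i < j → c (x i) (x j) = k i := by
  induction L generalizing s with
  | zero => exact ⟨Fin.elim0, Fin.elim0, fun i ↦ i.elim0, fun i ↦ i.elim0, fun i ↦ i.elim0⟩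
  | succ L ih =>
    classical
    have hs' : Fintype.card κ * (Fintype.card κ + 1) ^ L + 1 ≤ #s := by
      have : 0 < (Fintype.card κ + 1) ^ L := by positivity
      rw [pow_succ] at hs; nlinarith
    have hne : s.Nonempty := card_pos.mp (by omega)
    set a := s.min' hne
    have ha : a ∈ s := s.min'_mem hne
    obtain ⟨k₀, -, hk₀⟩ := exists_le_card_fiber_of_mul_le_card_of_maps_to
      (s := s.erase a) (f := c a) (n := (Fintype.card κ + 1) ^ L)
      (fun y _ ↦ mem_univ _) univ_nonempty (by rw [card_erase_of_mem ha, card_univ]; omega)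
    obtain ⟨x, k, hx, hxs, hxk⟩ := ih _ hk₀
    have hxs' : ∀ i, x i ∈ s.erase a ∧ c a (x i) = k₀ := fun i ↦ mem_filter.mp (hxs i)
    refine ⟨Fin.cons a x, Fin.cons k₀ k, Fin.strictMono_cons.mpr ⟨fun i ↦ ?_, hx⟩, ?_, ?_⟩
    · exact lt_of_le_of_ne (s.min'_le _ (mem_of_mem_erase (hxs' i).1))
        (ne_of_mem_erase (hxs' i).1).symm
    · simpa [Fin.forall_fin_succ, ha] using fun i ↦ mem_of_mem_erase (hxs' i).1
    · simp only [Fin.forall_fin_succ, Fin.cons_zero, Fin.cons_succ, Fin.succ_pos,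
        Fin.not_lt_zero, Fin.succ_lt_succ_iff, IsEmpty.forall_iff, forall_const, true_and]
      exact ⟨fun i ↦ (hxs' i).2, hxk⟩

theorem Fin.val_add_sub_le_of_strictMono {M N : ℕ} {f : Fin M → Fin N} (hf : StrictMono f)
    {u v : Fin M} (huv : u ≤ v) : (f u : ℕ) + (v - u) ≤ f v := by
  have h := card_le_card_of_injOn f (s := Icc u v) (t := Icc (f u) (f v))
    (fun w hw ↦ by
      obtain ⟨h₁, h₂⟩ := mem_Icc.mp hw
      exact mem_Icc.mpr ⟨hf.monotone h₁, hf.monotone h₂⟩) hf.injective.injOn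
  have := hf.monotone huv
  rw [Fin.card_Icc, Fin.card_Icc] at h
  rw [Fin.le_def] at this huv
  omega

theorem hasMonoCopy_of_pow_le {M N t : ℕ} (ht : 0 < t) (G : SimpleGraph (Fin M))
    (hN : (t + 1) ^ (t * M) ≤ N) (c : Fin N → Fin N → Fin t) : HasMonoCopy G c := by
  have : Nonempty (Fin t) := ⟨⟨0, ht⟩⟩
  obtain ⟨x, k, hx, -, hxk⟩ := exists_minHomogeneous_of_pow_le c (t * M) univ (by simpa using hN)
  obtain ⟨k₀, hk₀⟩ := Fintype.exists_le_card_fiber_of_mul_le_card (f := k) (n := M) (by simp)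
  obtain ⟨S, hS, hcard⟩ := exists_subset_card_eq hk₀
  set e := S.orderEmbOfFin hcard
  have he : ∀ i, k (e i) = k₀ := fun i ↦ (mem_filter.mp (hS (S.orderEmbOfFin_mem hcard i))).2
  exact ⟨k₀, x ∘ e, hx.comp e.strictMono,
    fun u v huv _ ↦ (hxk _ _ (e.strictMono huv)).trans (he u)⟩

def IsCornerFreeColoring {κ : Type*} (χ : ℕ → ℕ → κ) (K : ℕ) : Prop :=
  ∀ ⦃i i' j j' : ℕ⦄, i < i' → i' ≤ j → j < j' → j' ≤ K → χ i j = χ i' j → χ i' j ≠ χ i' j'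

/-- The new colour lives on the outer layer `i = 0` or `j = K + 2`, which never contains the
middle cell `(i', j)` of a corner. -/
theorem IsCornerFreeColoring.extend {t K : ℕ} {χ : ℕ → ℕ → Fin t}
    (hχ : IsCornerFreeColoring χ K) :
    IsCornerFreeColoring (fun i j ↦
      if i = 0 ∨ K + 2 ≤ j then Fin.last t else (χ (i - 1) (j - 1)).castSucc) (K + 2) := by
  intro i i' j j' h₁ h₂ h₃ h₄ e₁ e₂
  have hi' : ¬ (i' = 0 ∨ K + 2 ≤ j) := by omega
  simp only [if_neg hi'] at e₁ e₂
  split_ifs at e₁ e₂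
  · exact (Fin.castSucc_lt_last _).ne e₁.symm
  · exact (Fin.castSucc_lt_last _).ne e₁.symm
  · exact (Fin.castSucc_lt_last _).ne e₂
  · exact hχ (by omega) (by omega) (by omega) (by omega) (Fin.castSucc_injective _ e₁)
      (Fin.castSucc_injective _ e₂)

/-- The cells of colour `1`. One colour alone only handles the triangle of side `2`, so this
base is what makes the side `2t + 1` rather than `2t`. -/
def cornerFreeTwoColoring (i j : ℕ) : Fin 2 :=
  if (i, j) ∈ [(0, 3), (1, 1), (1, 2), (1, 3), (2, 2), (3, 4), (4, 4)] then 1 else 0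

theorem isCornerFreeColoring_cornerFreeTwoColoring :
    IsCornerFreeColoring cornerFreeTwoColoring 4 := by
  have : ∀ j' < 5, ∀ j < j', ∀ i' < j + 1, ∀ i < i',
      cornerFreeTwoColoring i j = cornerFreeTwoColoring i' j →
        cornerFreeTwoColoring i' j ≠ cornerFreeTwoColoring i' j' := by
    decide
  intro i i' j j' h₁ h₂ h₃ h₄
  exact this j' (by omega) j h₃ i' (by omega) i h₁

theorem exists_isCornerFreeColoring {t : ℕ} (ht : 2 ≤ t) :
    ∃ χ : ℕ → ℕ → Fin t, IsCornerFreeColoring χ (2 * t) := by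
  induction t, ht using Nat.le_induction with
  | base => exact ⟨cornerFreeTwoColoring, isCornerFreeColoring_cornerFreeTwoColoring⟩
  | succ t _ ih =>
    obtain ⟨χ, hχ⟩ := ih
    exact ⟨_, hχ.extend⟩

theorem IsCornerFreeColoring.blowUp_ne {κ : Type*} {χ : ℕ → ℕ → κ} {K r : ℕ}
    (hχ : IsCornerFreeColoring χ K) (hr : 0 < r) {a a' b b' : ℕ} (ha : a + r ≤ a')
    (hab : a' ≤ b) (hb : b + r ≤ b') (hb' : b' < (K + 1) * r)
    (e : χ (a / r) (b / r) = χ (a' / r) (b / r)) :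
    χ (a' / r) (b / r) ≠ χ (a' / r) (b' / r) := by
  have div_lt {x y : ℕ} (h : x + r ≤ y) : x / r < y / r := by
    have := Nat.div_le_div_right (c := r) h
    rw [Nat.add_div_right _ hr] at this
    omega
  exact hχ (div_lt ha) (Nat.div_le_div_right hab) (div_lt hb)
    (Nat.lt_succ_iff.mp ((Nat.div_lt_iff_lt_mul hr).mpr hb')) e

theorem not_hasMonoCopy_blowUp {m n t K r N : ℕ} {χ : ℕ → ℕ → Fin t}
    (hχ : IsCornerFreeColoring χ K) (hr : 0 < r) (hrm : r < m) (hrn : r < n)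
    (hN : N ≤ (K + 1) * r) {G : SimpleGraph (Fin (m + n))}
    (h₁ : G.Adj ⟨0, by omega⟩ ⟨m, by omega⟩)
    (h₂ : G.Adj ⟨m - 1, by omega⟩ ⟨m + n - 1, by omega⟩)
    (h₃ : G.Adj ⟨m - 1, by omega⟩ ⟨m, by omega⟩) :
    ¬ HasMonoCopy G fun x y : Fin N ↦ χ (x / r) (y / r) := by
  rintro ⟨k, f, hf, hk⟩
  let u₀ : Fin (m + n) := ⟨0, by omega⟩
  let u₁ : Fin (m + n) := ⟨m - 1, by omega⟩
  let v₀ : Fin (m + n) := ⟨m, by omega⟩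
  let v₁ : Fin (m + n) := ⟨m + n - 1, by omega⟩
  have hu : (f u₀ : ℕ) + (m - 1) ≤ f u₁ :=
    Fin.val_add_sub_le_of_strictMono hf (Fin.mk_le_mk.mpr (by omega))
  have hv : (f v₀ : ℕ) + (m + n - 1 - m) ≤ f v₁ :=
    Fin.val_add_sub_le_of_strictMono hf (Fin.mk_le_mk.mpr (by omega))
  have huv : f u₁ < f v₀ := hf (Fin.mk_lt_mk.mpr (by omega))
  have e₁ := hk u₀ v₀ (Fin.mk_lt_mk.mpr (by omega)) h₁
  have e₂ := hk u₁ v₁ (Fin.mk_lt_mk.mpr (by omega)) h₂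
  have e₃ := hk u₁ v₀ (Fin.mk_lt_mk.mpr (by omega)) h₃
  exact hχ.blowUp_ne hr (by omega) huv.le (by omega) ((f v₁).isLt.trans_le hN)
    (e₁.trans e₃.symm) (e₃.trans e₂.symm)

/-- For `t ≥ 2`, if `G` is a 2-ichromatic ordered graph with parts `v_1,…,v_m` and
`v_{m+1},…,v_{m+n}` having edges `v_1 v_{m+1}`, `v_m v_{m+n}`, and `v_m v_{m+1}`,
then `R_t(G) ≥ (2t+1)r + 1` where `r = min(m,n) - 1`. -/
theorem stmt11 {m n t : ℕ} (ht : 2 ≤ t) (hm : 1 ≤ m) (hn : 1 ≤ n)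
    (G : SimpleGraph (Fin (m + n)))
    (hedge1 : G.Adj ⟨0, by omega⟩ ⟨m, by omega⟩)
    (hedge2 : G.Adj ⟨m - 1, by omega⟩ ⟨m + n - 1, by omega⟩)
    (hedge3 : G.Adj ⟨m - 1, by omega⟩ ⟨m, by omega⟩) :
    (2 * t + 1) * (min m n - 1) + 1 ≤ orderedRamsey t G := by
  refine le_csInf ⟨_, hasMonoCopy_of_pow_le (by omega) G le_rfl⟩ fun N hN ↦ ?_
  by_contra! hN'
  rcases Nat.eq_zero_or_pos (min m n - 1) with hr | hr
  · obtain ⟨-, f, -⟩ := hN fun _ _ ↦ ⟨0, by omega⟩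
    rw [hr, mul_zero] at hN'
    exact absurd (f ⟨0, by omega⟩).isLt (by omega)
  · obtain ⟨χ, hχ⟩ := exists_isCornerFreeColoring ht
    exact not_hasMonoCopy_blowUp hχ hr (by omega) (by omega) (by omega) hedge1 hedge2 hedge3 (hN _)
end
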